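/- Let W : G_{n,k} → (0, ∞) be a measurable function on the Grassmannian with Haar probability measure ν and let w̄ > 0. Suppose that for some constants c₂, δ > 0 with δ ≤ 1/2 one has, for all p with 1 ≤ p ≤ 1/δ, (∫ W^{−p} dν)^{−1/p} ≥ (1 − c₂ max{√δ, pδ}) w̄. Then for all ε with c₁√δ < ε < 1 (where c₁ = 4c₂), ν({W ≤ (1 − ε) w̄}) ≤ exp(−c ε²/δ) for absolute constants c > 0. -/
import Mathlib


open MeasureTheory
open scoped ENNReal

set_option maxHeartbeats 1000000

private lemma aux_ratio (ε a w : ℝ) (hε0 : 0 < ε) (ha0 : 0 ≤ a) (ha : a ≤ ε / 2)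
    (hw : 0 < w) : (1 - ε) * w ≤ (1 - ε / 2) * ((1 - a) * w) := by
  nlinarith [mul_nonneg hw.le (by linarith : (0:ℝ) ≤ ε / 2 - a),
    mul_nonneg (mul_nonneg ha0 hw.le) hε0.le]

/-- Abstract form of the lower-deviation argument on the Grassmannian:
from reverse Hölder inequalities for negative moments of a positive measurable
function `W` on a probability space (the Grassmannian `G_{n,k}` with Haar
measure `ν`), lower deviations below the level `w0` follow. -/
theorem lower_deviation_from_negative_moments (c₂ : ℝ) (hc₂ : 0 < c₂) :
    ∃ c : ℝ, 0 < c ∧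
      ∀ (G : Type) [MeasurableSpace G] (ν : Measure G) [IsProbabilityMeasure ν]
        (W : G → ℝ), Measurable W → (∀ E, 0 < W E) →
        ∀ (w0 : ℝ), 0 < w0 →
        ∀ (δ : ℝ), 0 < δ → δ ≤ 1 / 2 →
        (∀ p : ℝ, 1 ≤ p → p ≤ 1 / δ →
          (1 - c₂ * max (Real.sqrt δ) (p * δ)) * w0 ≤
            (∫ E, W E ^ (-p) ∂ν) ^ (-(1 / p))) →
        ∀ ε : ℝ, 4 * c₂ * Real.sqrt δ < ε → ε < 1 →
          ν {E | W E ≤ (1 - ε) * w0} ≤ ENNReal.ofReal (Real.exp (-c * ε ^ 2 / δ)) := by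
  refine ⟨min (1 / (4 * c₂)) (1 / 2), lt_min (by positivity) (by norm_num), ?_⟩
  set c : ℝ := min (1 / (4 * c₂)) (1 / 2) with hc_def
  intro G _ ν _ W hWmeas hWpos w0 hw0 δ hδ hδ2 h ε hε hε1
  have hsδ : 0 < Real.sqrt δ := Real.sqrt_pos.mpr hδ
  have hsδ1 : Real.sqrt δ ≤ 1 := by
    rw [show (1:ℝ) = Real.sqrt 1 by simp]
    exact Real.sqrt_le_sqrt (by linarith)
  have hδsδ : δ = Real.sqrt δ * Real.sqrt δ := (Real.mul_self_sqrt hδ.le).symm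
  have hε0 : 0 < ε := lt_trans (by positivity) hε
  -- choice of p
  set p : ℝ := min (ε / (2 * c₂ * δ)) (1 / δ) with hp_def
  have hp1 : 1 ≤ p := by
    refine le_min ?_ ?_
    · rw [le_div_iff₀ (by positivity)]
      nlinarith
    · rw [le_div_iff₀ hδ]; linarith
  have hp0 : 0 < p := lt_of_lt_of_le one_pos hp1
  have hp2 : p ≤ 1 / δ := min_le_right _ _
  have hpa : p ≤ ε / (2 * c₂ * δ) := min_le_left _ _
  -- bound on the max term
  set M : ℝ := max (Real.sqrt δ) (p * δ) with hM_def
  have hM : c₂ * M ≤ ε / 2 := by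
    have hpa' : p * (2 * c₂ * δ) ≤ ε := by
      rw [← le_div_iff₀ (by positivity)]; exact hpa
    rw [hM_def, mul_max_of_nonneg _ _ hc₂.le]
    exact max_le (by nlinarith) (by nlinarith)
  have hA0 : 0 < (1 - c₂ * M) * w0 := by nlinarith
  have key := h p hp1 hp2
  set I : ℝ := ∫ E, W E ^ (-p) ∂ν with hI_def
  have hInonneg : 0 ≤ I := integral_nonneg fun E => Real.rpow_nonneg (hWpos E).le _
  have hI0 : 0 < I := by
    rcases hInonneg.lt_or_eq with h' | h'
    · exact h'
    · exfalso
      rw [← h', Real.zero_rpow (neg_ne_zero.mpr (one_div_pos.mpr hp0).ne')] at key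
      linarith
  have hInt : Integrable (fun E => W E ^ (-p)) ν := by
    by_contra hni
    rw [hI_def, integral_undef hni] at hI0
    exact lt_irrefl 0 hI0
  -- from key : A ≤ I ^ (-(1/p)), deduce I ≤ A ^ (-p)
  have hIA : I ≤ ((1 - c₂ * M) * w0) ^ (-p) := by
    have h2 : (I ^ (-(1/p))) ^ (-p) ≤ ((1 - c₂ * M) * w0) ^ (-p) :=
      Real.rpow_le_rpow_of_nonpos hA0 key (by linarith)
    rwa [← Real.rpow_mul hI0.le, neg_mul_neg, one_div, inv_mul_cancel₀ hp0.ne',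
      Real.rpow_one] at h2
  -- Markov
  set q : ℝ := (1 - ε) * w0 with hq_def
  have hq0 : 0 < q := by nlinarith
  have hmarkov := mul_meas_ge_le_integral_of_nonneg
    (Filter.Eventually.of_forall fun E => Real.rpow_nonneg (hWpos E).le (-p)) hInt (q ^ (-p))
  have hsub : {E | W E ≤ q} ⊆ {E | q ^ (-p) ≤ W E ^ (-p)} := by
    intro E hE
    exact Real.rpow_le_rpow_of_nonpos (hWpos E) hE (by linarith)
  have hfin : ν {E | W E ≤ q} ≠ ⊤ := measure_ne_top ν _
  have hmono : (ν {E | W E ≤ q}).toReal ≤ (ν {E | q ^ (-p) ≤ W E ^ (-p)}).toReal :=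
    ENNReal.toReal_mono (measure_ne_top ν _) (measure_mono hsub)
  have hqp0 : 0 < q ^ (-p) := Real.rpow_pos_of_pos hq0 _
  have hchain : q ^ (-p) * (ν {E | W E ≤ q}).toReal ≤ I := by
    calc q ^ (-p) * (ν {E | W E ≤ q}).toReal
        ≤ q ^ (-p) * (ν {E | q ^ (-p) ≤ W E ^ (-p)}).toReal :=
          mul_le_mul_of_nonneg_left hmono hqp0.le
      _ ≤ I := hmarkov
  have hreal : (ν {E | W E ≤ q}).toReal ≤ q ^ p * ((1 - c₂ * M) * w0) ^ (-p) := by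
    have : q ^ (-p) * (ν {E | W E ≤ q}).toReal ≤ ((1 - c₂ * M) * w0) ^ (-p) :=
      le_trans hchain hIA
    have h3 := mul_le_mul_of_nonneg_left this (Real.rpow_nonneg hq0.le p)
    rw [← mul_assoc, ← Real.rpow_add hq0, add_neg_cancel, Real.rpow_zero, one_mul] at h3
    exact h3
  -- the ratio bound
  have hratio : q ^ p * ((1 - c₂ * M) * w0) ^ (-p) = (q / ((1 - c₂ * M) * w0)) ^ p := by
    rw [Real.div_rpow hq0.le hA0.le, Real.rpow_neg hA0.le, div_eq_mul_inv]
  have hM0 : 0 ≤ M := le_trans hsδ.le (le_max_left _ _)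
  have hdiv : q / ((1 - c₂ * M) * w0) ≤ 1 - ε / 2 := by
    rw [div_le_iff₀ hA0]
    exact aux_ratio ε (c₂ * M) w0 hε0 (mul_nonneg hc₂.le hM0) hM hw0
  have hexp1 : (1 : ℝ) - ε / 2 ≤ Real.exp (-(ε / 2)) := by
    have := Real.add_one_le_exp (-(ε / 2)); linarith
  have hstep : (q / ((1 - c₂ * M) * w0)) ^ p ≤ Real.exp (-(ε / 2) * p) := by
    calc (q / ((1 - c₂ * M) * w0)) ^ p ≤ (Real.exp (-(ε / 2))) ^ p :=
          Real.rpow_le_rpow (by positivity) (le_trans hdiv hexp1) hp0.le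
      _ = Real.exp (-(ε / 2) * p) := (Real.exp_mul _ _).symm
  have hexp2 : Real.exp (-(ε / 2) * p) ≤ Real.exp (-c * ε ^ 2 / δ) := by
    apply Real.exp_le_exp.mpr
    have hc1 : c ≤ 1 / (4 * c₂) := min_le_left _ _
    have hc2 : c ≤ 1 / 2 := min_le_right _ _
    have hc0 : 0 < c := lt_min (by positivity) (by norm_num)
    have hc1' : c * (4 * c₂) ≤ 1 := by
      rw [← le_div_iff₀ (by positivity)]; exact hc1
    -- need : c * ε^2 / δ ≤ ε/2 * p
    have goal : c * ε ^ 2 / δ ≤ ε / 2 * p := by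
      rcases min_cases (ε / (2 * c₂ * δ)) (1 / δ) with ⟨hpe, _⟩ | ⟨hpe, _⟩ <;>
        rw [hp_def, hpe]
      · have h5 : ε / 2 * (ε / (2 * c₂ * δ)) = ε ^ 2 / (4 * c₂) / δ := by
          field_simp; ring
        rw [h5]
        gcongr
        rw [le_div_iff₀ (by positivity)]
        nlinarith [sq_nonneg ε]
      · rw [mul_one_div]
        gcongr
        nlinarith [mul_le_mul_of_nonneg_right hc2 (sq_nonneg ε),
          mul_le_mul_of_nonneg_left hε1.le hε0.le]
    calc -(ε / 2) * p = -(ε / 2 * p) := by ring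
      _ ≤ -(c * ε ^ 2 / δ) := neg_le_neg goal
      _ = -c * ε ^ 2 / δ := by ring
  have hfinal : (ν {E | W E ≤ q}).toReal ≤ Real.exp (-c * ε ^ 2 / δ) := by
    calc (ν {E | W E ≤ q}).toReal ≤ q ^ p * ((1 - c₂ * M) * w0) ^ (-p) := hreal
      _ = (q / ((1 - c₂ * M) * w0)) ^ p := hratio
      _ ≤ Real.exp (-(ε / 2) * p) := hstep
      _ ≤ Real.exp (-c * ε ^ 2 / δ) := hexp2
  calc ν {E | W E ≤ (1 - ε) * w0} = ENNReal.ofReal ((ν {E | W E ≤ q}).toReal) := by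
        rw [ENNReal.ofReal_toReal hfin]
    _ ≤ ENNReal.ofReal (Real.exp (-c * ε ^ 2 / δ)) := ENNReal.ofReal_le_ofReal hfinal
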